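/- Fix l row indices 1 ≤ μ_1 < … < μ_l ≤ m. Then for every n, det [ det((Ψ_{n+j−1}⋯Ψ_{n+1}Ψ_n))^{(μ,ν)} ]_{j=1,…,C(m,l); 1 ≤ ν_1 < … < ν_l ≤ m} = det [ det((Ψ_{n+j−1}⋯Ψ_{n+1}))^{(μ,ν)} ]_{j=1,…,C(m,l); 1 ≤ ν_1 < … < ν_l ≤ m} · (det Ψ_n)^{C(m−1,l−1)}, where the empty product of matrices is the identity matrix and the multi-indices ν are arranged in the same fixed ordering at every occurrence. -/
import Mathlib


open Matrix

/-- The product `Ψ_{n+j-1} ⋯ Ψ_{n+1} Ψ_n` of `j` consecutive companion matrices;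
the empty product (`j = 0`) is the identity matrix. -/
noncomputable def prodPsi {m : ℕ} (Ψ : ℕ → Matrix (Fin m) (Fin m) ℂ) (n : ℕ) :
    ℕ → Matrix (Fin m) (Fin m) ℂ
  | 0 => 1
  | j + 1 => Ψ (n + j) * prodPsi Ψ n j



open Matrix Finset Equiv Equiv.Perm BigOperators

variable {l m : ℕ}

local notation "ε" σ => ((Equiv.Perm.sign σ : ℤ) : ℂ)

theorem cb_aux (X : Matrix (Fin l) (Fin m) ℂ) (Y : Matrix (Fin m) (Fin l) ℂ)
    {p : Fin l → Fin m} (H : ¬Function.Injective p) :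
    (∑ σ : Perm (Fin l), (ε σ) * ∏ x, X (σ x) (p x) * Y (p x) x) = 0 := by
  obtain ⟨i, j, hpij, hij⟩ : ∃ i j, p i = p j ∧ i ≠ j := by
    rw [Function.Injective] at H
    push_neg at H
    obtain ⟨i, j, h1, h2⟩ := H
    exact ⟨i, j, h1, h2⟩
  exact Finset.sum_involution (fun σ _ => σ * Equiv.swap i j)
    (fun σ _ => by
      have : (∏ x, X (σ x) (p x)) = ∏ x, X ((σ * Equiv.swap i j) x) (p x) :=
        Fintype.prod_equiv (Equiv.swap i j) _ _ (by simp [Equiv.apply_swap_eq_self hpij])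
      simp [this, Equiv.Perm.sign_swap hij, -Equiv.Perm.sign_swap', Finset.prod_mul_distrib])
    (fun σ _ _ => (not_congr Equiv.mul_swap_eq_iff).mpr hij)
    (fun _ _ => Finset.mem_univ _)
    (fun σ _ => Equiv.mul_swap_involutive i j σ)

theorem cb_group (F : (Fin l → Fin m) → ℂ) :
    ∑ p ∈ Finset.univ.filter (fun p : Fin l → Fin m => Function.Injective p), F p
    = ∑ q : {s : Finset (Fin m) // s.card = l} × Perm (Fin l),
        F (fun i => q.1.1.orderEmbOfFin q.1.2 (q.2 i)) := by
  refine (Finset.sum_bij (fun q _ => fun i => q.1.1.orderEmbOfFin q.1.2 (q.2 i))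
    ?_ ?_ ?_ ?_).symm
  · intro q _
    refine Finset.mem_filter.2 ⟨Finset.mem_univ _, ?_⟩
    exact (q.1.1.orderEmbOfFin q.1.2).injective.comp q.2.injective
  · rintro ⟨⟨S, hS⟩, τ⟩ _ ⟨⟨S', hS'⟩, τ'⟩ _ h
    have h' : (fun i => S.orderEmbOfFin hS (τ i)) = fun i => S'.orderEmbOfFin hS' (τ' i) := h
    have hrange : (S : Set (Fin m)) = (S' : Set (Fin m)) := by
      have h1 : Set.range ((S.orderEmbOfFin hS) ∘ τ) =
          Set.range ((S'.orderEmbOfFin hS') ∘ τ') := by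
        simp only [Function.comp_def]; rw [h']
      rwa [Function.Surjective.range_comp τ.surjective,
        Function.Surjective.range_comp τ'.surjective,
        Finset.range_orderEmbOfFin, Finset.range_orderEmbOfFin] at h1
    have hSS' : S = S' := Finset.coe_injective hrange
    subst hSS'
    have hττ' : τ = τ' := by
      ext i
      have := congrFun h' i
      exact congrArg Fin.val ((S.orderEmbOfFin hS).injective this)
    simp [hττ']
  · intro p hp
    have hinj : Function.Injective p := (Finset.mem_filter.1 hp).2
    have hS : (Finset.image p Finset.univ).card = l := by
      rw [Finset.card_image_of_injective _ hinj, Finset.card_univ, Fintype.card_fin]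
    have hmem : ∀ i, p i ∈ Finset.image p Finset.univ :=
      fun i => Finset.mem_image_of_mem p (Finset.mem_univ i)
    set q : Fin l → Fin l :=
      fun i => ((Finset.image p Finset.univ).orderIsoOfFin hS).symm ⟨p i, hmem i⟩ with hqdef
    have hqinj : Function.Injective q := by
      intro a b hab
      apply hinj
      have := ((Finset.image p Finset.univ).orderIsoOfFin hS).symm.injective hab
      exact congrArg Subtype.val this
    refine ⟨⟨⟨Finset.image p Finset.univ, hS⟩,
      Equiv.ofBijective q ((Finite.injective_iff_bijective).1 hqinj)⟩,
      Finset.mem_univ _, ?_⟩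
    funext i
    show (Finset.image p Finset.univ).orderEmbOfFin hS (q i) = p i
    rw [← Finset.coe_orderIsoOfFin_apply, hqdef]
    simp
  · intro q _
    rfl

theorem cauchyBinet (X : Matrix (Fin l) (Fin m) ℂ) (Y : Matrix (Fin m) (Fin l) ℂ) :
    (X * Y).det = ∑ S : {s : Finset (Fin m) // s.card = l},
      (X.submatrix id (S.1.orderEmbOfFin S.2)).det *
        (Y.submatrix (S.1.orderEmbOfFin S.2) id).det := by
  have step1 : (X * Y).det = ∑ p : Fin l → Fin m, ∑ σ : Perm (Fin l),
      (ε σ) * ∏ i, X (σ i) (p i) * Y (p i) i := by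
    simp only [det_apply', Matrix.mul_apply, Finset.prod_univ_sum, Finset.mul_sum,
      Fintype.piFinset_univ]
    rw [Finset.sum_comm]
  have step2 : (X * Y).det = ∑ p ∈ Finset.univ.filter
      (fun p : Fin l → Fin m => Function.Injective p), ∑ σ : Perm (Fin l),
      (ε σ) * ∏ i, X (σ i) (p i) * Y (p i) i := by
    rw [step1]
    refine (Finset.sum_subset (Finset.filter_subset _ _) fun p _ hp => cb_aux X Y ?_).symm
    simpa using hp
  rw [step2, cb_group (fun p => ∑ σ : Perm (Fin l), (ε σ) * ∏ i, X (σ i) (p i) * Y (p i) i),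
    ← Finset.univ_product_univ, Finset.sum_product]
  refine Finset.sum_congr rfl fun S _ => ?_
  have inner : ∀ τ : Perm (Fin l),
      (∑ σ : Perm (Fin l), (ε σ) * ∏ i, X (σ i) (S.1.orderEmbOfFin S.2 (τ i)) *
        Y (S.1.orderEmbOfFin S.2 (τ i)) i)
      = (∑ ρ : Perm (Fin l), (ε ρ) * ∏ i, X (ρ i) (S.1.orderEmbOfFin S.2 i)) *
        ((ε τ) * ∏ i, Y (S.1.orderEmbOfFin S.2 (τ i)) i) := by
    intro τ
    rw [Finset.sum_mul]
    refine Fintype.sum_equiv (Equiv.mulRight τ⁻¹) _ _ fun ρ => ?_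
    have h1 : (∏ i, X ((ρ * τ⁻¹) i) (S.1.orderEmbOfFin S.2 i)) =
        ∏ i, X (ρ i) (S.1.orderEmbOfFin S.2 (τ i)) := by
      rw [← Equiv.prod_comp τ (fun i => X ((ρ * τ⁻¹) i) (S.1.orderEmbOfFin S.2 i))]
      simp [Equiv.Perm.mul_apply]
    have hsign : ((ε (ρ * τ⁻¹)) * (ε τ)) = (ε ρ) := by
      rw [← Int.cast_mul, ← Units.val_mul, ← Equiv.Perm.sign_mul, inv_mul_cancel_right]
    calc (ε ρ) * ∏ i, X (ρ i) (S.1.orderEmbOfFin S.2 (τ i)) * Y (S.1.orderEmbOfFin S.2 (τ i)) i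
        = (ε ρ) * ((∏ i, X (ρ i) (S.1.orderEmbOfFin S.2 (τ i))) *
            ∏ i, Y (S.1.orderEmbOfFin S.2 (τ i)) i) := by rw [Finset.prod_mul_distrib]
      _ = ((ε (ρ * τ⁻¹)) * ∏ i, X ((ρ * τ⁻¹) i) (S.1.orderEmbOfFin S.2 i)) *
            ((ε τ) * ∏ i, Y (S.1.orderEmbOfFin S.2 (τ i)) i) := by
          rw [h1, ← hsign]; ring
      _ = _ := rfl
  calc (∑ τ : Perm (Fin l), ∑ σ : Perm (Fin l),
        (ε σ) * ∏ i, X (σ i) (S.1.orderEmbOfFin S.2 (τ i)) * Y (S.1.orderEmbOfFin S.2 (τ i)) i)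
      = ∑ τ : Perm (Fin l), (∑ ρ : Perm (Fin l), (ε ρ) * ∏ i, X (ρ i) (S.1.orderEmbOfFin S.2 i)) *
          ((ε τ) * ∏ i, Y (S.1.orderEmbOfFin S.2 (τ i)) i) :=
        Finset.sum_congr rfl fun τ _ => inner τ
    _ = (X.submatrix id (S.1.orderEmbOfFin S.2)).det *
          (Y.submatrix (S.1.orderEmbOfFin S.2) id).det := by
        rw [← Finset.mul_sum, det_apply', det_apply']
        simp only [submatrix_apply, id_eq]


/-- determinant of a "triangular" matrix w.r.t. an integer key -/
theorem det_eq_prod_diag {I : Type*} [Fintype I] [DecidableEq I] (M : Matrix I I ℂ)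
    (f : I → ℤ) (h : ∀ i j, i ≠ j → M i j ≠ 0 → f i < f j) :
    M.det = ∏ i, M i i := by
  rw [det_apply']
  rw [Finset.sum_eq_single (1 : Perm I)]
  · simp
  · intro σ _ hσ
    have hex : ∃ x, σ x ≠ x := by
      by_contra hc; push_neg at hc; exact hσ (Equiv.ext fun x => hc x)
    by_cases hz : ∀ x, M (σ x) x ≠ 0
    · exfalso
      have hlt : ∑ x : I, f (σ x) < ∑ x : I, f x := by
        obtain ⟨x₀, hx₀⟩ := hex
        refine Finset.sum_lt_sum (fun x _ => ?_) ⟨x₀, Finset.mem_univ _, ?_⟩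
        · by_cases hxx : σ x = x
          · rw [hxx]
          · exact (h _ _ hxx (hz x)).le
        · exact h _ _ hx₀ (hz x₀)
      rw [Equiv.sum_comp σ f] at hlt
      exact lt_irrefl _ hlt
    · push_neg at hz
      obtain ⟨x, hx⟩ := hz
      rw [Finset.prod_eq_zero (f := fun i => M (σ i) i) (Finset.mem_univ x) hx, mul_zero]
  · intro hc; exact absurd (Finset.mem_univ _) hc


/-- the `l`-th compound matrix, indexed via `e` -/
noncomputable def SFcomp (e : Fin (Nat.choose m l) ≃ {s : Finset (Fin m) // s.card = l})
    (A : Matrix (Fin m) (Fin m) ℂ) :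
    Matrix (Fin (Nat.choose m l)) (Fin (Nat.choose m l)) ℂ :=
  Matrix.of fun ν ν' =>
    (A.submatrix ((e ν).1.orderEmbOfFin (e ν).2) ((e ν').1.orderEmbOfFin (e ν').2)).det


theorem SFcomp_mul (e : Fin (Nat.choose m l) ≃ {s : Finset (Fin m) // s.card = l})
    (A B : Matrix (Fin m) (Fin m) ℂ) :
    SFcomp e (A * B) = SFcomp e A * SFcomp e B := by
  ext ν ν'
  show ((A * B).submatrix _ _).det = _
  have hsub : (A * B).submatrix ((e ν).1.orderEmbOfFin (e ν).2) ((e ν').1.orderEmbOfFin (e ν').2)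
      = (A.submatrix ((e ν).1.orderEmbOfFin (e ν).2) id) *
        (B.submatrix id ((e ν').1.orderEmbOfFin (e ν').2)) := by
    ext a b
    simp [Matrix.mul_apply]
  rw [hsub, cauchyBinet]
  rw [Matrix.mul_apply]
  rw [← Equiv.sum_comp e (fun S => ((A.submatrix ((e ν).1.orderEmbOfFin (e ν).2) id).submatrix
      id (S.1.orderEmbOfFin S.2)).det *
      ((B.submatrix id ((e ν').1.orderEmbOfFin (e ν').2)).submatrix (S.1.orderEmbOfFin S.2) id).det)]
  refine Finset.sum_congr rfl fun τ _ => ?_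
  simp [SFcomp, Matrix.submatrix_submatrix, Function.comp_def]

theorem SFcount (e : Fin (Nat.choose m l) ≃ {s : Finset (Fin m) // s.card = l})
    (hl : 1 ≤ l) (i : Fin m) :
    (Finset.univ.filter fun ν : Fin (Nat.choose m l) => i ∈ (e ν).1).card
      = Nat.choose (m - 1) (l - 1) := by
  have hcard : (Finset.univ.erase i).card = m - 1 := by
    rw [Finset.card_erase_of_mem (Finset.mem_univ i), Finset.card_univ, Fintype.card_fin]
  rw [← hcard, ← Finset.card_powersetCard]
  refine Finset.card_bij (fun ν _ => (e ν).1.erase i) ?_ ?_ ?_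
  · intro ν hν
    have hi : i ∈ (e ν).1 := (Finset.mem_filter.1 hν).2
    rw [Finset.mem_powersetCard]
    constructor
    · exact Finset.erase_subset_erase i (Finset.subset_univ _)
    · rw [Finset.card_erase_of_mem hi, (e ν).2]
  · intro ν hν ν' hν' hh
    have hi : i ∈ (e ν).1 := (Finset.mem_filter.1 hν).2
    have hi' : i ∈ (e ν').1 := (Finset.mem_filter.1 hν').2
    have hh' : ((e ν).1).erase i = ((e ν').1).erase i := hh
    have : (e ν).1 = (e ν').1 := by
      rw [← Finset.insert_erase hi, ← Finset.insert_erase hi', hh']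
    exact e.injective (Subtype.ext this)
  · intro T hT
    rw [Finset.mem_powersetCard] at hT
    have hiT : i ∉ T := fun hmem => by
      have := hT.1 hmem
      simp at this
    have hScard : (insert i T).card = l := by
      rw [Finset.card_insert_of_notMem hiT, hT.2]
      omega
    refine ⟨e.symm ⟨insert i T, hScard⟩, ?_, ?_⟩
    · rw [Finset.mem_filter]
      refine ⟨Finset.mem_univ _, ?_⟩
      rw [Equiv.apply_symm_apply]
      exact Finset.mem_insert_self i T
    · show ((e (e.symm ⟨insert i T, hScard⟩)).1).erase i = T
      have hee : e (e.symm ⟨insert i T, hScard⟩) = ⟨insert i T, hScard⟩ :=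
        e.apply_symm_apply _
      rw [hee]
      exact Finset.erase_insert hiT

theorem SFcomp_diagonal (e : Fin (Nat.choose m l) ≃ {s : Finset (Fin m) // s.card = l})
    (D : Fin m → ℂ) :
    SFcomp e (diagonal D) = diagonal (fun ν => ∏ i ∈ (e ν).1, D i) := by
  ext ν ν'
  by_cases hνν' : ν = ν'
  · subst hνν'
    show ((diagonal D).submatrix _ _).det = _
    have hdiag : (diagonal D).submatrix ((e ν).1.orderEmbOfFin (e ν).2)
        ((e ν).1.orderEmbOfFin (e ν).2) = diagonal (fun a => D ((e ν).1.orderEmbOfFin (e ν).2 a)) := by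
      ext a b
      by_cases hab : a = b
      · subst hab; simp
      · have : (e ν).1.orderEmbOfFin (e ν).2 a ≠ (e ν).1.orderEmbOfFin (e ν).2 b :=
          fun hc => hab (((e ν).1.orderEmbOfFin (e ν).2).injective hc)
        simp [Matrix.diagonal_apply_ne _ this, Matrix.diagonal_apply_ne _ hab]
    rw [hdiag, det_diagonal, Matrix.diagonal_apply_eq]
    refine Finset.prod_bij (fun a _ => (e ν).1.orderEmbOfFin (e ν).2 a) ?_ ?_ ?_ ?_
    · intro a _; exact Finset.orderEmbOfFin_mem _ _ _
    · intro a _ b _ hab; exact ((e ν).1.orderEmbOfFin (e ν).2).injective hab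
    · intro x hx
      have : x ∈ Set.range ((e ν).1.orderEmbOfFin (e ν).2) := by
        rw [Finset.range_orderEmbOfFin]; exact hx
      obtain ⟨a, ha⟩ := this
      exact ⟨a, Finset.mem_univ _, ha⟩
    · intro a _; rfl
  · have hne : (e ν).1 ≠ (e ν').1 := fun hc => hνν' (e.injective (Subtype.ext hc))
    obtain ⟨x, hx1, hx2⟩ : ∃ x, x ∈ (e ν).1 ∧ x ∉ (e ν').1 := by
      by_contra hc
      push_neg at hc
      exact hne (Finset.eq_of_subset_of_card_le hc (by rw [(e ν).2, (e ν').2]))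
    obtain ⟨a, ha⟩ : ∃ a, (e ν).1.orderEmbOfFin (e ν).2 a = x := by
      have : x ∈ Set.range ((e ν).1.orderEmbOfFin (e ν).2) := by
        rw [Finset.range_orderEmbOfFin]; exact hx1
      exact this
    show ((diagonal D).submatrix _ _).det = _
    rw [Matrix.diagonal_apply_ne _ hνν']
    refine Matrix.det_eq_zero_of_row_eq_zero a fun b => ?_
    have : (e ν).1.orderEmbOfFin (e ν).2 a ≠ (e ν').1.orderEmbOfFin (e ν').2 b := by
      rw [ha]
      intro hc
      exact hx2 (hc ▸ Finset.orderEmbOfFin_mem _ _ _)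
    simp [Matrix.diagonal_apply_ne _ this]

theorem SFdet_diag (e : Fin (Nat.choose m l) ≃ {s : Finset (Fin m) // s.card = l})
    (hl : 1 ≤ l) (D : Fin m → ℂ) :
    (SFcomp e (diagonal D)).det = (diagonal D).det ^ Nat.choose (m - 1) (l - 1) := by
  rw [SFcomp_diagonal, det_diagonal, det_diagonal]
  have step : ∀ ν : Fin (Nat.choose m l), (∏ i ∈ (e ν).1, D i)
      = ∏ i : Fin m, (if i ∈ (e ν).1 then D i else 1) := by
    intro ν
    rw [Finset.prod_ite_mem, Finset.univ_inter]
  simp_rw [step]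
  rw [Finset.prod_comm]
  have step2 : ∀ i : Fin m, (∏ ν : Fin (Nat.choose m l), (if i ∈ (e ν).1 then D i else 1))
      = D i ^ Nat.choose (m - 1) (l - 1) := by
    intro i
    rw [Finset.prod_ite, Finset.prod_const, Finset.prod_const_one, mul_one, SFcount e hl i]
  simp_rw [step2]
  rw [Finset.prod_pow]

theorem SFcomp_transvection (e : Fin (Nat.choose m l) ≃ {s : Finset (Fin m) // s.card = l})
    (i j : Fin m) (hij : i ≠ j) (c : ℂ) :
    (SFcomp e (Matrix.transvection i j c)).det = 1 := by
  have hentry : ∀ a b : Fin m, Matrix.transvection i j c a b =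
      (if a = b then 1 else 0) + (if i = a ∧ j = b then c else 0) := by
    intro a b
    simp [Matrix.transvection, Matrix.one_apply, Matrix.single, Matrix.add_apply]
  have hT : ∀ a b : Fin m, Matrix.transvection i j c a b ≠ 0 → a = b ∨ (a = i ∧ b = j) := by
    intro a b hab
    by_contra hc
    push_neg at hc
    apply hab
    rw [hentry]
    rw [if_neg hc.1, if_neg]
    · ring
    · rintro ⟨h1, h2⟩; exact hc.2 h1.symm h2.symm
  have hdiagT : ∀ a : Fin m, Matrix.transvection i j c a a = 1 := by
    intro a
    rw [hentry, if_pos rfl, if_neg]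
    · ring
    · rintro ⟨h1, h2⟩; exact hij (h1.trans h2.symm)
  -- key function on multi-indices
  set f : Fin (Nat.choose m l) → ℤ :=
    fun ν => ∑ x : Fin l, ((j : ℤ) - (i : ℤ)) * (((e ν).1.orderEmbOfFin (e ν).2 x : ℕ) : ℤ)
    with hfdef
  have hijZ : ((i : ℤ)) ≠ (j : ℤ) := by
    intro hc
    exact hij (Fin.ext (by exact_mod_cast hc))
  have hsq : (0 : ℤ) < ((j : ℤ) - (i : ℤ)) * ((j : ℤ) - (i : ℤ)) := by
    refine mul_self_pos.mpr fun hc => hijZ (by omega)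
  -- off-diagonal entries of the compound force the key to increase
  have hkey : ∀ ν ν', ν ≠ ν' → SFcomp e (Matrix.transvection i j c) ν ν' ≠ 0 → f ν < f ν' := by
    intro ν ν' hνν' hne
    have hdet : ((Matrix.transvection i j c).submatrix ((e ν).1.orderEmbOfFin (e ν).2)
        ((e ν').1.orderEmbOfFin (e ν').2)).det ≠ 0 := hne
    rw [det_apply'] at hdet
    obtain ⟨σ, -, hσ⟩ := Finset.exists_ne_zero_of_sum_ne_zero hdet
    have hprod : (∏ x : Fin l, (Matrix.transvection i j c)
        ((e ν).1.orderEmbOfFin (e ν).2 (σ x)) ((e ν').1.orderEmbOfFin (e ν').2 x)) ≠ 0 :=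
      right_ne_zero_of_mul hσ
    have hfac : ∀ x : Fin l, (Matrix.transvection i j c)
        ((e ν).1.orderEmbOfFin (e ν).2 (σ x)) ((e ν').1.orderEmbOfFin (e ν').2 x) ≠ 0 := by
      intro x
      exact Finset.prod_ne_zero_iff.1 hprod x (Finset.mem_univ x)
    have hcases : ∀ x : Fin l, (e ν).1.orderEmbOfFin (e ν).2 (σ x) =
        (e ν').1.orderEmbOfFin (e ν').2 x ∨
        ((e ν).1.orderEmbOfFin (e ν).2 (σ x) = i ∧ (e ν').1.orderEmbOfFin (e ν').2 x = j) :=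
      fun x => hT _ _ (hfac x)
    have hle : ∀ x : Fin l,
        ((j : ℤ) - (i : ℤ)) * (((e ν).1.orderEmbOfFin (e ν).2 (σ x) : ℕ) : ℤ) ≤
        ((j : ℤ) - (i : ℤ)) * (((e ν').1.orderEmbOfFin (e ν').2 x : ℕ) : ℤ) := by
      intro x
      rcases hcases x with h | ⟨h1, h2⟩
      · rw [h]
      · rw [h1, h2]; nlinarith [hsq]
    have hstrict : ∃ x : Fin l,
        ((j : ℤ) - (i : ℤ)) * (((e ν).1.orderEmbOfFin (e ν).2 (σ x) : ℕ) : ℤ) <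
        ((j : ℤ) - (i : ℤ)) * (((e ν').1.orderEmbOfFin (e ν').2 x : ℕ) : ℤ) := by
      by_contra hcon
      push_neg at hcon
      have hall : ∀ x : Fin l, (e ν).1.orderEmbOfFin (e ν).2 (σ x) =
          (e ν').1.orderEmbOfFin (e ν').2 x := by
        intro x
        rcases hcases x with h | ⟨h1, h2⟩
        · exact h
        · exfalso
          have := hcon x
          rw [h1, h2] at this
          nlinarith [hsq]
      -- then the two index sets coincide, contradiction
      apply hνν'
      apply e.injective
      apply Subtype.ext
      apply Finset.coe_injective
      have hr : Set.range (((e ν).1.orderEmbOfFin (e ν).2) ∘ σ) =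
          Set.range ((e ν').1.orderEmbOfFin (e ν').2) := by
        have hfun : (((e ν).1.orderEmbOfFin (e ν).2) ∘ σ) =
            ⇑((e ν').1.orderEmbOfFin (e ν').2) := funext fun x => hall x
        rw [hfun]
      rwa [Function.Surjective.range_comp σ.surjective,
        Finset.range_orderEmbOfFin, Finset.range_orderEmbOfFin] at hr
    have hsum : f ν = ∑ x : Fin l,
        ((j : ℤ) - (i : ℤ)) * (((e ν).1.orderEmbOfFin (e ν).2 (σ x) : ℕ) : ℤ) := by
      rw [hfdef]
      exact (Equiv.sum_comp σ fun x =>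
        ((j : ℤ) - (i : ℤ)) * (((e ν).1.orderEmbOfFin (e ν).2 x : ℕ) : ℤ)).symm
    rw [hsum, hfdef]
    obtain ⟨x₀, hx₀⟩ := hstrict
    exact Finset.sum_lt_sum (fun x _ => hle x) ⟨x₀, Finset.mem_univ _, hx₀⟩
  rw [det_eq_prod_diag _ f hkey]
  refine Finset.prod_eq_one fun ν _ => ?_
  show ((Matrix.transvection i j c).submatrix _ _).det = 1
  rw [det_eq_prod_diag _ (fun a : Fin l => ((j : ℤ) - (i : ℤ)) *
      (((e ν).1.orderEmbOfFin (e ν).2 a : ℕ) : ℤ))]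
  · refine Finset.prod_eq_one fun a _ => hdiagT _
  · intro a b hab hne
    rcases hT _ _ hne with h | ⟨h1, h2⟩
    · exact absurd (((e ν).1.orderEmbOfFin (e ν).2).injective h) hab
    · rw [h1, h2]; nlinarith [hsq]

theorem SFcomp_one (e : Fin (Nat.choose m l) ≃ {s : Finset (Fin m) // s.card = l}) :
    SFcomp e (1 : Matrix (Fin m) (Fin m) ℂ) = 1 := by
  have : (1 : Matrix (Fin m) (Fin m) ℂ) = diagonal (fun _ => 1) := by simp
  rw [this, SFcomp_diagonal]
  ext ν ν'
  by_cases h : ν = ν' <;> simp [h, Matrix.one_apply, Matrix.diagonal_apply]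

theorem sylvesterFranke (e : Fin (Nat.choose m l) ≃ {s : Finset (Fin m) // s.card = l})
    (hl : 1 ≤ l) (A : Matrix (Fin m) (Fin m) ℂ) :
    (SFcomp e A).det = A.det ^ Nat.choose (m - 1) (l - 1) := by
  refine Matrix.diagonal_transvection_induction
    (fun B => (SFcomp e B).det = B.det ^ Nat.choose (m - 1) (l - 1)) A
    (fun D _ => SFdet_diag e hl D) (fun t => ?_) (fun B C hB hC => ?_)
  · obtain ⟨i, j, hij, c⟩ := t
    rw [Matrix.TransvectionStruct.toMatrix_mk, SFcomp_transvection e i j hij c,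
      Matrix.det_transvection_of_ne i j hij c, one_pow]
  · show (SFcomp e (B * C)).det = (B * C).det ^ Nat.choose (m - 1) (l - 1)
    have hB' : (SFcomp e B).det = B.det ^ Nat.choose (m - 1) (l - 1) := hB
    have hC' : (SFcomp e C).det = C.det ^ Nat.choose (m - 1) (l - 1) := hC
    rw [SFcomp_mul, Matrix.det_mul, hB', hC', Matrix.det_mul, mul_pow]



theorem prodPsi_succ_right {m : ℕ} (Ψ : ℕ → Matrix (Fin m) (Fin m) ℂ) (n : ℕ) :
    ∀ j : ℕ, prodPsi Ψ n (j + 1) = prodPsi Ψ (n + 1) j * Ψ n := by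
  intro j
  induction j with
  | zero =>
      show Ψ (n + 0) * prodPsi Ψ n 0 = prodPsi Ψ (n + 1) 0 * Ψ n
      simp [prodPsi]
  | succ j ih =>
      show Ψ (n + (j + 1)) * prodPsi Ψ n (j + 1) = Ψ (n + 1 + j) * prodPsi Ψ (n + 1) j * Ψ n
      rw [ih, show n + (j + 1) = n + 1 + j from by omega, Matrix.mul_assoc]

/-- **Equation (3.4) of the paper** (discrete Abel formula for the minors): for a
fixed strictly increasing row multi-index `μs` and every `n`,
`det [ det (Ψ_{n+j-1} ⋯ Ψ_n)^{(μ,ν)} ]_{j=1,…,C(m,l); ν}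
  = det [ det (Ψ_{n+j-1} ⋯ Ψ_{n+1})^{(μ,ν)} ]_{j=1,…,C(m,l); ν} * (det Ψ_n)^{C(m-1,l-1)}`,
the multi-indices `ν` being enumerated by a fixed ordering `e` at every occurrence. -/
theorem stmt_8 (m l : ℕ) (hm : 1 ≤ m) (hl : 1 ≤ l) (hlm : l ≤ m)
    (α : ℕ → Fin (m + 1) → ℂ)
    (hα : ∀ n, α n 0 * α n (Fin.last m) ≠ 0)
    (Ψ : ℕ → Matrix (Fin m) (Fin m) ℂ)
    (hΨ : ∀ n (i j : Fin m), Ψ n i j =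
      if (i : ℕ) + 1 = m then - α n (Fin.castSucc j) / α n (Fin.last m)
      else if (j : ℕ) = (i : ℕ) + 1 then 1 else 0)
    (μs : Fin l → Fin m) (hμ : StrictMono μs)
    (e : Fin (Nat.choose m l) ≃ {s : Finset (Fin m) // s.card = l}) :
    ∀ n : ℕ,
      (Matrix.of fun (j ν : Fin (Nat.choose m l)) =>
        (Matrix.of fun (a b : Fin l) =>
          prodPsi Ψ n ((j : ℕ) + 1) (μs a) ((e ν).1.orderEmbOfFin (e ν).2 b)).det).det
      =
      (Matrix.of fun (j ν : Fin (Nat.choose m l)) =>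
        (Matrix.of fun (a b : Fin l) =>
          prodPsi Ψ (n + 1) (j : ℕ) (μs a) ((e ν).1.orderEmbOfFin (e ν).2 b)).det).det *
      (Ψ n).det ^ (Nat.choose (m - 1) (l - 1)) := by
  intro n
  have key : (Matrix.of fun (j ν : Fin (Nat.choose m l)) =>
        (Matrix.of fun (a b : Fin l) =>
          prodPsi Ψ n ((j : ℕ) + 1) (μs a) ((e ν).1.orderEmbOfFin (e ν).2 b)).det)
      = (Matrix.of fun (j ν : Fin (Nat.choose m l)) =>
        (Matrix.of fun (a b : Fin l) =>
          prodPsi Ψ (n + 1) (j : ℕ) (μs a) ((e ν).1.orderEmbOfFin (e ν).2 b)).det) *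
        SFcomp e (Ψ n) := by
    ext j ν
    rw [Matrix.mul_apply]
    show ((prodPsi Ψ n ((j : ℕ) + 1)).submatrix μs ((e ν).1.orderEmbOfFin (e ν).2)).det = _
    rw [prodPsi_succ_right]
    have hsub : (prodPsi Ψ (n + 1) (j : ℕ) * Ψ n).submatrix μs ((e ν).1.orderEmbOfFin (e ν).2)
        = ((prodPsi Ψ (n + 1) (j : ℕ)).submatrix μs id) *
          ((Ψ n).submatrix id ((e ν).1.orderEmbOfFin (e ν).2)) := by
      ext a b
      simp [Matrix.mul_apply]
    rw [hsub, cauchyBinet]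
    rw [← Equiv.sum_comp e (fun S : {s : Finset (Fin m) // s.card = l} =>
      (((prodPsi Ψ (n + 1) (j : ℕ)).submatrix μs id).submatrix id
          (S.1.orderEmbOfFin S.2)).det *
        ((((Ψ n).submatrix id ((e ν).1.orderEmbOfFin (e ν).2))).submatrix
          (S.1.orderEmbOfFin S.2) id).det)]
    refine Finset.sum_congr rfl fun τ _ => ?_
    show _ = ((prodPsi Ψ (n + 1) (j : ℕ)).submatrix μs ((e τ).1.orderEmbOfFin (e τ).2)).det *
        ((Ψ n).submatrix ((e τ).1.orderEmbOfFin (e τ).2) ((e ν).1.orderEmbOfFin (e ν).2)).det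
    rw [Matrix.submatrix_submatrix, Matrix.submatrix_submatrix]
    simp [Function.comp_def]
  rw [key, Matrix.det_mul, sylvesterFranke e hl (Ψ n)]
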